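/- Let D be a division ring, S a set, and M an m×m matrix whose entries are functions from S to D (m ≥ 1). Then M satisfies M|_{v_r}·M|_{v_{r−1}}···M|_{v_1} = 0 for all v_1,...,v_r ∈ S (with r minimal) if and only if there exists T ∈ GL_m(D) such that T⁻¹MT is block lower triangular with r zero square diagonal blocks of sizes s_1,...,s_r ≥ 1, where each subdiagonal block A_i (the functions just below the i-th zero block) has columns linearly independent over D as functions. -/

import Mathlib

/-! Columns form a right `D`-vector space, i.e. a `Dᵐᵒᵖ`-module. Let `W k` be the subspace of
columns killed by every product of `k` evaluations of `M`, so that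
`W (k + 1) = {x | M|_v x ∈ W k for all v}`. The chain `0 = W 0 ⊆ W 1 ⊆ ⋯` increases strictly
until it stabilises, so if `r` is least with `W r` everything, the flag `F j = W (r - j)` has `r`
distinct steps. Choose the columns of `T` to be a basis adapted to `F`, sorted by level. Then
`M|_v (F j) ⊆ F (j + 1)` is the block triangular shape with zero diagonal blocks, and
`F (j + 1) = {x ∈ F j | M|_v x ∈ F (j + 2) for all v}` is the independence of the columns of the
subdiagonal blocks. Conversely, these two conditions force the flag of coordinate subspaces of `T`
to be `W (r - ·)`. -/

/-- Evaluate every entry of a matrix of functions `S → R` at `v : S`. -/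
def evalM {R : Type} [Ring R] {S : Type} {m : ℕ}
    (M : Matrix (Fin m) (Fin m) (S → R)) (v : S) : Matrix (Fin m) (Fin m) R :=
  M.map fun f => f v

/-- The product `M|_{v_r} ⬝ M|_{v_{r-1}} ⬝ ⋯ ⬝ M|_{v_1}` (0-based: `v` indexed `r-1, …, 0`). -/
def evalProd {R : Type} [Ring R] {S : Type} {m r : ℕ}
    (M : Matrix (Fin m) (Fin m) (S → R)) (v : Fin r → S) : Matrix (Fin m) (Fin m) R :=
  ((List.ofFn fun i => evalM M (v i)).reverse).prod

open MulOpposite Module Submodule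
open scoped Matrix

section KerFlag

variable {K V S : Type*} [Semiring K] [AddCommMonoid V] [Module K V]

def kerFlag (φ : S → V →ₗ[K] V) : ℕ → Submodule K V
  | 0 => ⊥
  | k + 1 => ⨅ s, (kerFlag φ k).comap (φ s)

variable {φ : S → V →ₗ[K] V}

@[simp]
theorem kerFlag_zero : kerFlag φ 0 = ⊥ := rfl

theorem mem_kerFlag_succ {k : ℕ} {x : V} : x ∈ kerFlag φ (k + 1) ↔ ∀ s, φ s x ∈ kerFlag φ k := by
  simp [kerFlag]

theorem kerFlag_mono : Monotone (kerFlag φ) := by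
  refine monotone_nat_of_le_succ fun k => ?_
  induction k with
  | zero => exact bot_le
  | succ k ih => exact fun x hx => mem_kerFlag_succ.2 fun s => ih (mem_kerFlag_succ.1 hx s)

theorem kerFlag_add_eq_of_eq_succ {k : ℕ} (h : kerFlag φ k = kerFlag φ (k + 1)) (n : ℕ) :
    kerFlag φ (k + n) = kerFlag φ k := by
  induction n with
  | zero => rfl
  | succ n ih =>
    calc kerFlag φ (k + n + 1) = ⨅ s, (kerFlag φ (k + n)).comap (φ s) := rfl
      _ = kerFlag φ (k + 1) := by rw [ih]; rfl
      _ = kerFlag φ k := h.symm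

theorem kerFlag_ne_succ_of_lt {r k : ℕ} (htop : kerFlag φ r = ⊤) (hlt : ∀ k < r, kerFlag φ k ≠ ⊤)
    (hk : k < r) : kerFlag φ k ≠ kerFlag φ (k + 1) := fun h =>
  hlt k hk (by rw [← kerFlag_add_eq_of_eq_succ h (r - k), Nat.add_sub_cancel' hk.le, htop])

structure IsTightFlag (φ : S → V →ₗ[K] V) (r : ℕ) (F : ℕ → Submodule K V) : Prop where
  antitone : Antitone F
  zero_eq_top : F 0 = ⊤
  eq_bot : F r = ⊥
  mapsTo : ∀ s j, ∀ x ∈ F j, φ s x ∈ F (j + 1)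
  mem_succ : ∀ l, l + 1 < r → ∀ x ∈ F l, (∀ s, φ s x ∈ F (l + 2)) → x ∈ F (l + 1)

theorem IsTightFlag.kerFlag_eq {r : ℕ} {F : ℕ → Submodule K V} (hF : IsTightFlag φ r F) {k : ℕ}
    (hk : k ≤ r) : kerFlag φ k = F (r - k) := by
  induction k with
  | zero => simp [hF.eq_bot]
  | succ k ih =>
    obtain ⟨j, rfl⟩ : ∃ j, r = j + (k + 1) := ⟨r - (k + 1), by omega⟩
    ext x
    rw [mem_kerFlag_succ, ih (by omega), show j + (k + 1) - k = j + 1 by omega,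
      show j + (k + 1) - (k + 1) = j by omega]
    refine ⟨fun hx => ?_, fun hx s => hF.mapsTo s j x hx⟩
    suffices ∀ l ≤ j, x ∈ F l from this j le_rfl
    intro l hl
    induction l with
    | zero => simp [hF.zero_eq_top]
    | succ l ihl =>
      exact hF.mem_succ l (by omega) x (ihl (by omega)) fun s => hF.antitone (by omega) (hx s)

theorem isTightFlag_kerFlag {r : ℕ} (htop : kerFlag φ r = ⊤) :
    IsTightFlag φ r fun j => kerFlag φ (r - j) where
  antitone _ _ h := kerFlag_mono (by omega)
  zero_eq_top := htop
  eq_bot := by simp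
  mapsTo s j x hx := by
    cases hk : r - j with
    | zero => simp_all
    | succ k =>
      rw [hk, mem_kerFlag_succ] at hx
      simpa [show r - (j + 1) = k by omega] using hx s
  mem_succ l hl x _ hx := by
    rw [show r - (l + 1) = r - (l + 2) + 1 by omega, mem_kerFlag_succ]
    exact hx

end KerFlag

theorem exists_eq_of_span_image_ne {K V ι : Type*} [Semiring K] [AddCommMonoid V] [Module K V]
    {v : ι → V} {lvl : ι → ℕ} {k : ℕ}
    (h : span K (v '' {i | k + 1 ≤ lvl i}) ≠ span K (v '' {i | k ≤ lvl i})) : ∃ i, lvl i = k := by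
  by_contra! hne
  refine h (congrArg _ (congrArg _ (Set.ext fun i => ?_)))
  have := hne i
  show k + 1 ≤ lvl i ↔ k ≤ lvl i
  omega

section AdaptedBasis

variable {K V : Type*} [DivisionRing K] [AddCommGroup V] [Module K V] {U : ℕ → Submodule K V}
  {r : ℕ}

theorem exists_linearIndepOn_span_inter_eq (hU : Antitone U) (hr : U r = ⊥) :
    ∃ s : Set V, LinearIndepOn K id s ∧ ∀ j, span K (s ∩ U j) = U j := by
  have span_inter_le (s : Set V) (j : ℕ) : span K (s ∩ U j) ≤ U j :=
    span_le.2 Set.inter_subset_right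
  suffices ∀ n, ∃ s : Set V, s ⊆ U (r - n) ∧ LinearIndepOn K id s ∧
      ∀ j, r - n ≤ j → U j ≤ span K (s ∩ U j) by
    obtain ⟨s, -, hs, hspan⟩ := this r
    exact ⟨s, hs, fun j => (span_inter_le s j).antisymm (hspan j (by omega))⟩
  intro n
  induction n with
  | zero =>
    refine ⟨∅, by simp, linearIndepOn_empty K id, fun j hj => ?_⟩
    simpa [hr] using hU (show r ≤ j by omega)
  | succ n ih =>
    obtain ⟨s, hsU, hs, hspan⟩ := ih
    obtain ⟨t, htU, hst, hUt, ht⟩ :=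
      exists_linearIndepOn_extension hs (hsU.trans (hU (by omega : r - (n + 1) ≤ r - n)))
    refine ⟨t, htU, ht, fun j hj => ?_⟩
    rcases eq_or_ne j (r - (n + 1)) with rfl | hj'
    · simpa [Set.inter_eq_left.2 htU] using hUt
    · exact (hspan j (by omega)).trans (span_mono (Set.inter_subset_inter_left _ hst))

theorem exists_lt_forall_mem_iff_le (hU : Antitone U) (h0 : U 0 = ⊤) (hr : U r = ⊥) {x : V}
    (hx : x ≠ 0) :
    ∃ l < r, ∀ j, x ∈ U j ↔ j ≤ l := by
  classical
  have hxr : x ∉ U r := by simpa [hr] using hx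
  have hex : ∃ k, x ∉ U k := ⟨r, hxr⟩
  have hpos : Nat.find hex ≠ 0 := fun h => Nat.find_spec hex (by simp [h, h0])
  refine ⟨Nat.find hex - 1, by have := Nat.find_min' hex hxr; omega, fun j => ?_⟩
  constructor
  · intro hj
    by_contra! hlt
    exact Nat.find_spec hex (hU (by omega) hj)
  · intro hj
    simpa using Nat.find_min hex (by omega : j < Nat.find hex)

theorem exists_basis_adapted_of_antitone [FiniteDimensional K V] (hU : Antitone U) (h0 : U 0 = ⊤)
    (hr : U r = ⊥) {n : ℕ} (hn : finrank K V = n) :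
    ∃ (b : Basis (Fin n) K V) (lvl : Fin n → Fin r), Monotone lvl ∧
      ∀ j, span K (b '' {i | j ≤ (lvl i : ℕ)}) = U j := by
  obtain ⟨s, hs, hspan⟩ := exists_linearIndepOn_span_inter_eq hU hr
  choose lvl₀ hlvl₀r hlvl₀ using fun x : s =>
    exists_lt_forall_mem_iff_le hU h0 hr (fun h => hs.zero_notMem_image ⟨x, x.2, h⟩ : (x : V) ≠ 0)
  let b₀ : Basis s K V := Basis.mk (v := ((↑) : s → V)) hs (by simpa [h0] using (hspan 0).ge)
  have hb₀ (x : s) : b₀ x = x := Basis.mk_apply _ _ _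
  have : Finite s := LinearIndependent.finite hs
  let e : s ≃ Fin n := Finite.equivFinOfCardEq (by rw [← hn, finrank_eq_nat_card_basis b₀])
  let lvl₁ : Fin n → Fin r := fun i => ⟨lvl₀ (e.symm i), hlvl₀r _⟩
  let σ := Tuple.sort lvl₁
  refine ⟨b₀.reindex (e.trans σ.symm), lvl₁ ∘ σ, Tuple.monotone_sort lvl₁, fun j => ?_⟩
  rw [← hspan j]
  congr 1
  ext y
  simp only [Basis.reindex_apply, hb₀, Equiv.symm_trans_apply, Equiv.symm_symm,
    Set.mem_image, Set.mem_ofPred_eq, Function.comp_apply, lvl₁, ← hlvl₀, Set.mem_inter_iff,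
    SetLike.mem_coe]
  constructor
  · rintro ⟨i, hi, rfl⟩
    exact ⟨Subtype.mem _, hi⟩
  · rintro ⟨hy, hyU⟩
    exact ⟨σ.symm (e ⟨y, hy⟩), by simpa using hyU, by simp⟩

end AdaptedBasis

section MatrixFlags

variable {R : Type} [Ring R]

theorem evalProd_zero {S : Type} {m : ℕ} (M : Matrix (Fin m) (Fin m) (S → R)) (v : Fin 0 → S) :
    evalProd M v = 1 := by
  simp [evalProd]

theorem evalProd_cons {S : Type} {m k : ℕ} (M : Matrix (Fin m) (Fin m) (S → R)) (s : S)
    (v : Fin k → S) : evalProd M (Fin.cons s v) = evalProd M v * evalM M s := by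
  simp [evalProd, List.ofFn_succ, List.prod_append]

theorem mem_kerFlag_evalM_iff {S : Type} {m k : ℕ} {M : Matrix (Fin m) (Fin m) (S → R)}
    {x : Fin m → R} :
    x ∈ kerFlag (fun s => Matrix.mulVecBilin ℕ Rᵐᵒᵖ (evalM M s)) k ↔
      ∀ v : Fin k → S, evalProd M v *ᵥ x = 0 := by
  induction k generalizing x with
  | zero => simp [evalProd_zero]
  | succ k ih =>
    simp [mem_kerFlag_succ, ih, Fin.forall_fin_succ_pi, evalProd_cons, Matrix.mulVec_mulVec]

theorem kerFlag_evalM_eq_top_iff {S : Type} {m k : ℕ} {M : Matrix (Fin m) (Fin m) (S → R)} :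
    kerFlag (fun s => Matrix.mulVecBilin ℕ Rᵐᵒᵖ (evalM M s)) k = ⊤ ↔
      ∀ v : Fin k → S, evalProd M v = 0 := by
  simp only [eq_top_iff', mem_kerFlag_evalM_iff, Matrix.ext_iff_mulVec (B := 0),
    Matrix.zero_mulVec]
  exact forall_comm

end MatrixFlags

section CoordFlag

variable {R n : Type*} [Ring R] [Fintype n]

def coordFlag (P : Matrix n n R) (blk : n → ℕ) (j : ℕ) : Submodule Rᵐᵒᵖ (n → R) :=
  ⨅ (i) (_ : blk i < j), LinearMap.ker (LinearMap.proj i ∘ₗ Matrix.mulVecBilin ℕ Rᵐᵒᵖ P)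

variable {P T T' : Matrix n n R} {blk : n → ℕ}

theorem mem_coordFlag {j : ℕ} {x : n → R} :
    x ∈ coordFlag P blk j ↔ ∀ i, blk i < j → (P *ᵥ x) i = 0 := by
  simp [coordFlag]

theorem coordFlag_antitone : Antitone (coordFlag P blk) := fun _ _ h _ hx =>
  mem_coordFlag.2 fun i hi => mem_coordFlag.1 hx i (by omega)

theorem coordFlag_zero : coordFlag P blk 0 = ⊤ := by
  simp [eq_top_iff', mem_coordFlag]

theorem coordFlag_eq_bot [DecidableEq n] (hTT' : T * T' = 1) {r : ℕ} (hblk : ∀ i, blk i < r) :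
    coordFlag T' blk r = ⊥ := by
  refine eq_bot_iff.2 fun x hx => ?_
  have hx0 : T' *ᵥ x = 0 := funext fun i => mem_coordFlag.1 hx i (hblk i)
  simpa [Matrix.mulVec_mulVec, hTT'] using congrArg (T *ᵥ ·) hx0

theorem coordFlag_ne_top [DecidableEq n] [Nontrivial R] (hT'T : T' * T = 1) {i : n} {j : ℕ}
    (hi : blk i < j) :
    coordFlag T' blk j ≠ ⊤ := fun h => by
  have := mem_coordFlag.1 (h ▸ mem_top : T *ᵥ Pi.single i 1 ∈ coordFlag T' blk j) i hi
  rw [Matrix.mulVec_mulVec, hT'T, Matrix.one_mulVec] at this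
  simp at this

theorem single_mem_coordFlag [DecidableEq n] (hT'T : T' * T = 1) (j : n) :
    T *ᵥ Pi.single j 1 ∈ coordFlag T' blk (blk j) :=
  mem_coordFlag.2 fun i hi => by
    rw [Matrix.mulVec_mulVec, hT'T, Matrix.one_mulVec]
    exact Pi.single_eq_of_ne (by rintro rfl; omega) _

theorem conj_apply_eq_mulVec_single [DecidableEq n] (A : Matrix n n R) (i j : n) :
    (T' * A * T) i j = (T' *ᵥ (A *ᵥ (T *ᵥ Pi.single j 1))) i := by
  rw [Matrix.mulVec_mulVec, Matrix.mulVec_mulVec, Matrix.mulVec_single]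
  simp

theorem mulVec_eq_conj_mulVec [DecidableEq n] (hTT' : T * T' = 1) (A : Matrix n n R)
    (x : n → R) :
    T' *ᵥ (A *ᵥ x) = (T' * A * T) *ᵥ (T' *ᵥ x) := by
  simp [Matrix.mulVec_mulVec, Matrix.mul_assoc, hTT']

theorem mapsTo_coordFlag_iff [DecidableEq n] (hTT' : T * T' = 1) (hT'T : T' * T = 1)
    (A : Matrix n n R) :
    (∀ j, ∀ x ∈ coordFlag T' blk j, A *ᵥ x ∈ coordFlag T' blk (j + 1)) ↔
      ∀ i j, blk i ≤ blk j → (T' * A * T) i j = 0 := by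
  constructor
  · intro h i j hij
    rw [conj_apply_eq_mulVec_single]
    exact mem_coordFlag.1 (h _ _ (single_mem_coordFlag hT'T j)) i (by omega)
  · intro h j x hx
    refine mem_coordFlag.2 fun i hi => ?_
    rw [mulVec_eq_conj_mulVec hTT']
    refine Finset.sum_eq_zero fun l _ => ?_
    by_cases hl : blk l < j
    · simp [mem_coordFlag.1 hx l hl]
    · simp [h i l (by omega)]

theorem mulVec_apply_eq_sum_filter {N : Matrix n n R} (hN : ∀ i j, blk i ≤ blk j → N i j = 0)
    {l : ℕ} {c : n → R} (hc : ∀ j, blk j < l → c j = 0) {i : n} (hi : blk i = l + 1) :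
    (N *ᵥ c) i = ∑ j ∈ Finset.univ.filter (fun j => blk j = l), N i j * c j := by
  simp only [Matrix.mulVec, dotProduct, Finset.sum_filter]
  refine Finset.sum_congr rfl fun j _ => ?_
  split_ifs with hj
  · rfl
  · rcases Nat.lt_or_gt_of_ne hj with h | h
    · simp [hc j h]
    · simp [hN i j (by omega)]

theorem mem_coordFlag_succ_iff [DecidableEq n] {S : Type*} (hTT' : T * T' = 1)
    (hT'T : T' * T = 1) {N : S → Matrix n n R}
    (hZ : ∀ s i j, blk i ≤ blk j → (T' * N s * T) i j = 0) (l : ℕ) :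
    (∀ x ∈ coordFlag T' blk l, (∀ s, N s *ᵥ x ∈ coordFlag T' blk (l + 2)) →
        x ∈ coordFlag T' blk (l + 1)) ↔
      ∀ c : n → R, (∀ s i, blk i = l + 1 →
          ∑ j ∈ Finset.univ.filter (fun j => blk j = l), (T' * N s * T) i j * c j = 0) →
        ∀ j, blk j = l → c j = 0 := by
  constructor
  · intro h c hc j hj
    set c' : n → R := fun j => if blk j = l then c j else 0
    have hc' (j : n) (hj : blk j < l) : c' j = 0 := if_neg (by omega)
    have hx : T' *ᵥ (T *ᵥ c') = c' := by rw [Matrix.mulVec_mulVec, hT'T, Matrix.one_mulVec]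
    have hxl : T *ᵥ c' ∈ coordFlag T' blk l := mem_coordFlag.2 fun i hi => by rw [hx, hc' i hi]
    have hNx (s : S) : N s *ᵥ (T *ᵥ c') ∈ coordFlag T' blk (l + 2) := by
      have hl := (mapsTo_coordFlag_iff hTT' hT'T (N s)).2 (hZ s) l _ hxl
      refine mem_coordFlag.2 fun i hi => ?_
      rcases Nat.lt_or_ge (blk i) (l + 1) with hi' | hi'
      · exact mem_coordFlag.1 hl i hi'
      rw [mulVec_eq_conj_mulVec hTT', hx, mulVec_apply_eq_sum_filter (hZ s) hc' (by omega),
        ← hc s i (by omega)]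
      refine Finset.sum_congr rfl fun j hj => ?_
      simp [c', (Finset.mem_filter.1 hj).2]
    have := mem_coordFlag.1 (h _ hxl hNx) j (by omega)
    rw [hx] at this
    simpa [c', hj] using this
  · intro h x hx hNx
    refine mem_coordFlag.2 fun i hi => ?_
    rcases Nat.lt_or_ge (blk i) l with hi' | hi'
    · exact mem_coordFlag.1 hx i hi'
    refine h _ (fun s i hi => ?_) i (by omega)
    rw [← mulVec_apply_eq_sum_filter (hZ s) (mem_coordFlag.1 hx) hi, ← mulVec_eq_conj_mulVec hTT']
    exact mem_coordFlag.1 (hNx s) i (by omega)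

theorem isTightFlag_coordFlag_iff [DecidableEq n] {S : Type*} (hTT' : T * T' = 1)
    (hT'T : T' * T = 1) {r : ℕ} (hblk : ∀ i, blk i < r) (N : S → Matrix n n R) :
    IsTightFlag (fun s => Matrix.mulVecBilin ℕ Rᵐᵒᵖ (N s)) r (coordFlag T' blk) ↔
      (∀ s i j, blk i ≤ blk j → (T' * N s * T) i j = 0) ∧
      ∀ l, l + 1 < r → ∀ c : n → R, (∀ s i, blk i = l + 1 →
          ∑ j ∈ Finset.univ.filter (fun j => blk j = l), (T' * N s * T) i j * c j = 0) →
        ∀ j, blk j = l → c j = 0 := by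
  constructor
  · intro hF
    have hZ s := (mapsTo_coordFlag_iff hTT' hT'T (N s)).1 fun j => hF.mapsTo s j
    exact ⟨hZ, fun l hl => (mem_coordFlag_succ_iff hTT' hT'T hZ l).1 (hF.mem_succ l hl)⟩
  · rintro ⟨hZ, hI⟩
    exact
      { antitone := coordFlag_antitone
        zero_eq_top := coordFlag_zero
        eq_bot := coordFlag_eq_bot hTT' hblk
        mapsTo := fun s => (mapsTo_coordFlag_iff hTT' hT'T (N s)).2 (hZ s)
        mem_succ := fun l hl => (mem_coordFlag_succ_iff hTT' hT'T hZ l).2 (hI l hl) }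

end CoordFlag

section Coordinates

variable {R n : Type*} [Ring R] [Fintype n]

theorem Module.Basis.exists_mulVec_eq_repr [DecidableEq n] (b : Basis n Rᵐᵒᵖ (n → R)) :
    ∃ T T' : Matrix n n R, T * T' = 1 ∧ T' * T = 1 ∧ ∀ x i, (T' *ᵥ x) i = unop (b.repr x i) := by
  let T : Matrix n n R := Matrix.of fun i j => b j i
  let T' : Matrix n n R := Matrix.of fun i l => unop (b.repr (Pi.single l 1) i)
  have hT (c : n → R) : T *ᵥ c = ∑ j, op (c j) • b j := Matrix.mulVec_eq_sum c T
  have hT' (x : n → R) (i : n) : (T' *ᵥ x) i = unop (b.repr x i) := by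
    conv_rhs => rw [← Finset.univ_sum_single x]
    simp only [map_sum, Finsupp.coe_finsetSum, Finset.sum_apply, Finset.unop_sum]
    refine Finset.sum_congr rfl fun l _ => ?_
    have : (Pi.single l (x l) : n → R) = op (x l) • (Pi.single l 1 : n → R) := by
      simp [← Pi.single_smul']
    rw [this, map_smul]
    rfl
  refine ⟨T, T', Matrix.ext_iff_mulVec.2 fun x => ?_, Matrix.ext_iff_mulVec.2 fun c => ?_, hT'⟩
  · rw [← Matrix.mulVec_mulVec, hT, Matrix.one_mulVec]
    simp_rw [hT', op_unop]
    exact b.sum_repr x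
  · ext i
    rw [← Matrix.mulVec_mulVec, hT', hT, b.repr_sum_self, Matrix.one_mulVec, unop_op]

theorem coordFlag_eq_span {b : Basis n Rᵐᵒᵖ (n → R)} {T' : Matrix n n R}
    (hT' : ∀ x i, (T' *ᵥ x) i = unop (b.repr x i)) (blk : n → ℕ) (j : ℕ) :
    coordFlag T' blk j = span Rᵐᵒᵖ (b '' {i | j ≤ blk i}) := by
  ext x
  simp only [mem_coordFlag, b.mem_span_image, hT', unop_eq_zero_iff, Set.subset_def,
    Finset.mem_coe, Finsupp.mem_support_iff, Set.mem_ofPred_eq, ← not_lt, not_imp_not]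

end Coordinates

theorem finrank_fun_mulOpposite {D n : Type*} [DivisionRing D] [Fintype n] :
    finrank Dᵐᵒᵖ (n → D) = Fintype.card n := by
  rw [(LinearEquiv.piCongrRight fun _ => opLinearEquiv Dᵐᵒᵖ :
    (n → D) ≃ₗ[Dᵐᵒᵖ] (n → Dᵐᵒᵖ)).finrank_eq, finrank_fintype_fun_eq_card]

instance {D n : Type*} [DivisionRing D] [Finite n] : FiniteDimensional Dᵐᵒᵖ (n → D) :=
  Module.Finite.equiv (LinearEquiv.piCongrRight fun _ => opLinearEquiv Dᵐᵒᵖ :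
    (n → D) ≃ₗ[Dᵐᵒᵖ] (n → Dᵐᵒᵖ)).symm

theorem stmt11 {D : Type} [DivisionRing D] {S : Type} {m r : ℕ}
    (M : Matrix (Fin m) (Fin m) (S → D)) :
    ((∀ v : Fin r → S, evalProd M v = 0) ∧
      ∀ r' < r, ¬ (∀ v : Fin r' → S, evalProd M v = 0)) ↔
    ∃ T T' : Matrix (Fin m) (Fin m) D, T * T' = 1 ∧ T' * T = 1 ∧
      ∃ blk : Fin m → Fin r, Monotone blk ∧
        (∀ k : Fin r, ∃ i, blk i = k) ∧
        (∀ (v : S) (i j : Fin m), blk i ≤ blk j → (T' * evalM M v * T) i j = 0) ∧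
        (∀ (k : ℕ), k + 1 < r → ∀ c : Fin m → D,
          (∀ (v : S) (i : Fin m), (blk i : ℕ) = k + 1 →
            (∑ j ∈ Finset.univ.filter (fun j => (blk j : ℕ) = k),
              (T' * evalM M v * T) i j * c j) = 0) →
          ∀ j : Fin m, (blk j : ℕ) = k → c j = 0) := by
  simp only [← kerFlag_evalM_eq_top_iff]
  constructor
  · rintro ⟨htop, hlt⟩
    have hF := isTightFlag_kerFlag htop
    obtain ⟨b, blk, hmono, hspan⟩ := exists_basis_adapted_of_antitone hF.antitone
      hF.zero_eq_top hF.eq_bot (finrank_fun_mulOpposite.trans (Fintype.card_fin m))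
    obtain ⟨T, T', hTT', hT'T, hT'⟩ := b.exists_mulVec_eq_repr
    have hcoord : coordFlag T' (fun i => (blk i : ℕ)) = fun j => kerFlag _ (r - j) :=
      funext fun j => (coordFlag_eq_span hT' _ j).trans (hspan j)
    refine ⟨T, T', hTT', hT'T, blk, hmono, fun k => ?_,
      (isTightFlag_coordFlag_iff hTT' hT'T (fun i => (blk i).isLt) (evalM M)).1 (hcoord ▸ hF)⟩
    have hne := kerFlag_ne_succ_of_lt htop hlt (k := r - (k + 1)) (by omega)
    rw [show r - (k + 1) + 1 = r - k by omega] at hne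
    obtain ⟨i, hi⟩ := exists_eq_of_span_image_ne (v := b) (lvl := fun i => (blk i : ℕ))
      (by rw [hspan, hspan]; exact hne)
    exact ⟨i, Fin.ext hi⟩
  · rintro ⟨T, T', hTT', hT'T, blk, -, hsurj, hZI⟩
    have hF := (isTightFlag_coordFlag_iff hTT' hT'T (fun i => (blk i).isLt) (evalM M)).2 hZI
    refine ⟨by rw [hF.kerFlag_eq le_rfl, Nat.sub_self, hF.zero_eq_top], fun k hk => ?_⟩
    obtain ⟨i, hi⟩ := hsurj ⟨0, by omega⟩
    rw [hF.kerFlag_eq hk.le]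
    exact coordFlag_ne_top hT'T (i := i) (by simp [hi]; omega)
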